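/- arXiv:1604.00713 — 4 statements merged into one kernel-verified Lean document; each statement's English description precedes it below -/
import Mathlib

section
/- Let (α, μ) be a σ-finite measure space and τ : α → α a measure-preserving map. Let f : α → ℝ be measurable and suppose that for every λ > 0 the truncated function f·1_{{|f|>λ}} is integrable (i.e. f belongs to the space R₀ = (L₁+L∞)₀). Then for μ-almost every x ∈ α, the Birkhoff averages (1/n)·∑_{k=0}^{n-1} f(τ^k x) converge to a finite limit as n → ∞. -/
/-!
The upper limit of the Birkhoff averages is `τ`-invariant, since
`(n + 1) A_{n+1} g x = g x + n A_n g (τ x)`. Garsia's maximal lemma gives `∫_E g ≥ 0` for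
integrable `g` and every invariant set `E` on which each point has some positive Birkhoff sum.
Applied to `g - b` (or first to `g - b·1_C` with `μ C < ∞`, which by σ-finiteness shows `μ E < ∞`),
it makes null the invariant sets where the upper limit is `+∞`, or exceeds `b` while the lower
limit is below `a < b`; so the averages of an integrable function converge a.e. to a finite limit.
For `f ∈ R₀` the truncation `f·1_{|f| > λ}` is integrable and within `λ` of `f` everywhere, so the
averages of `f` are uniformly within `λ` of a.e. convergent sequences, hence a.e. Cauchy.
-/

open MeasureTheory Filter Finset Topology
open scoped ENNReal

theorem cauchySeq_of_forall_dist_le_of_cauchySeq {X β : Type*} [PseudoMetricSpace X] [Nonempty β]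
    [SemilatticeSup β] {u : β → X}
    (h : ∀ ε > 0, ∃ v : β → X, CauchySeq v ∧ ∀ n, dist (u n) (v n) ≤ ε) : CauchySeq u := by
  refine Metric.cauchySeq_iff.2 fun ε hε => ?_
  obtain ⟨v, hv, huv⟩ := h (ε / 3) (by positivity)
  obtain ⟨N, hN⟩ := Metric.cauchySeq_iff.1 hv (ε / 3) (by positivity)
  refine ⟨N, fun m hm n hn => ?_⟩
  calc dist (u m) (u n) ≤ dist (u m) (v m) + dist (v m) (v n) + dist (v n) (u n) :=
        dist_triangle4 _ _ _ _
    _ < ε := by linarith [huv m, huv n, hN m hm n hn, dist_comm (v n) (u n)]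

theorem Real.exists_tendsto_of_limsup_le_liminf {β : Type*} {l : Filter β} [l.NeBot]
    {u : β → ℝ} (h : limsup (fun n => (u n : EReal)) l ≤ liminf (fun n => (u n : EReal)) l)
    (htop : limsup (fun n => (u n : EReal)) l ≠ ⊤) (hbot : liminf (fun n => (u n : EReal)) l ≠ ⊥) :
    ∃ L, Tendsto u l (𝓝 L) := by
  have hL := le_antisymm h liminf_le_limsup
  refine ⟨(liminf (fun n => (u n : EReal)) l).toReal, EReal.tendsto_coe.1 ?_⟩
  rw [EReal.coe_toReal (hL ▸ htop) hbot]
  exact tendsto_of_liminf_eq_limsup rfl hL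

theorem EReal.limsup_le_limsup_of_eventually_lt {β : Type*} {l : Filter β} {u v : β → ℝ}
    (h : ∀ c c' : ℝ, c < c' → (∀ᶠ n in l, v n < c) → ∀ᶠ n in l, u n < c') :
    limsup (fun n => (u n : EReal)) l ≤ limsup (fun n => (v n : EReal)) l := by
  refine le_of_forall_gt_imp_ge_of_dense fun z hz => ?_
  obtain ⟨c, hvc, hcz⟩ := EReal.exists_between_coe_real hz
  obtain ⟨c', hcc', hc'z⟩ := EReal.exists_between_coe_real hcz
  have hv : ∀ᶠ n in l, v n < c := (eventually_lt_of_limsup_lt hvc).mono fun n hn => by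
    exact_mod_cast hn
  refine limsup_le_of_le (by isBoundedDefault) ?_
  filter_upwards [h c c' (by exact_mod_cast hcc') hv] with n hn
  exact (EReal.coe_lt_coe_iff.2 hn).le.trans hc'z.le

theorem EReal.limsup_eq_of_succ_mul_eq {u v : ℕ → ℝ} (a : ℝ)
    (h : ∀ n : ℕ, (n + 1) * u (n + 1) = a + n * v n) :
    limsup (fun n => (u n : EReal)) atTop = limsup (fun n => (v n : EReal)) atTop := by
  have hlarge (c c' : ℝ) (hcc' : c < c') : ∀ᶠ n : ℕ in atTop, |a - c| < (c' - c) * n := by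
    filter_upwards [tendsto_natCast_atTop_atTop.eventually_gt_atTop (|a - c| / (c' - c))]
      with n hn
    rwa [div_lt_iff₀ (_root_.sub_pos.2 hcc'), mul_comm] at hn
  rw [← limsup_nat_add _ 1]
  apply le_antisymm <;> refine EReal.limsup_le_limsup_of_eventually_lt fun c c' hcc' hlt => ?_
  · filter_upwards [hlt, hlarge c c' hcc'] with n hv hn
    nlinarith [h n, le_abs_self (a - c), (n.cast_nonneg : (0 : ℝ) ≤ n)]
  · filter_upwards [hlt, hlarge c c' hcc'] with n hu hn
    nlinarith [h n, neg_abs_le (a - c), (n.cast_nonneg : (0 : ℝ) ≤ n)]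

section BirkhoffSum

variable {α : Type*} {τ : α → α}

theorem birkhoffSum_indicator {M : Type*} [AddCommMonoid M] {E : Set α} (hE : τ ⁻¹' E = E)
    (g : α → M) (n : ℕ) : birkhoffSum τ (E.indicator g) n = E.indicator (birkhoffSum τ g n) := by
  ext x
  have hk (k : ℕ) : τ^[k] x ∈ E ↔ x ∈ E := by
    rw [← Set.mem_preimage, Function.IsFixedPt.preimage_iterate hE k]
  by_cases hx : x ∈ E <;> simp [birkhoffSum, Set.indicator, hk, hx]

theorem birkhoffSum_le_mul {g : α → ℝ} {c : ℝ} (h : ∀ y, g y ≤ c) (n : ℕ) (x : α) :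
    birkhoffSum τ g n x ≤ n * c := by
  simpa [birkhoffSum] using Finset.sum_le_card_nsmul (range n) _ c fun k _ => h (τ^[k] x)

theorem natCast_mul_birkhoffAverage (g : α → ℝ) (n : ℕ) (x : α) :
    n * birkhoffAverage ℝ τ g n x = birkhoffSum τ g n x := by
  rcases eq_or_ne n 0 with rfl | hn
  · simp
  · simp [birkhoffAverage, hn]

theorem abs_birkhoffAverage_le {g : α → ℝ} {c : ℝ} (h : ∀ y, |g y| ≤ c) (n : ℕ) (x : α) :
    |birkhoffAverage ℝ τ g n x| ≤ c := by
  rcases Nat.eq_zero_or_pos n with rfl | hn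
  · simpa using (abs_nonneg _).trans (h x)
  have hsum : |birkhoffSum τ g n x| ≤ n * c := by
    refine abs_le.2 ⟨?_, birkhoffSum_le_mul (fun y => (abs_le.1 (h y)).2) n x⟩
    refine neg_le.1 ?_
    simpa [birkhoffSum_neg] using
      birkhoffSum_le_mul (τ := τ) (g := -g) (fun y => neg_le.1 (abs_le.1 (h y)).1) n x
  rw [birkhoffAverage, smul_eq_mul, abs_mul, abs_inv, Nat.abs_cast,
    inv_mul_le_iff₀ (by exact_mod_cast hn)]
  exact hsum

theorem abs_sub_indicator_lt_abs_le (f : α → ℝ) {l : ℝ} (hl : 0 ≤ l) (y : α) :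
    |f y - {x | l < |f x|}.indicator f y| ≤ l := by
  by_cases hy : l < |f y|
  · simpa [hy] using hl
  · simpa [hy] using not_lt.1 hy

noncomputable def birkhoffMax (τ : α → α) (g : α → ℝ) (N : ℕ) (x : α) : ℝ :=
  (range (N + 1)).sup' nonempty_range_add_one fun n => birkhoffSum τ g n x

theorem birkhoffMax_eq_sup' (g : α → ℝ) (N : ℕ) :
    birkhoffMax τ g N = (range (N + 1)).sup' nonempty_range_add_one (birkhoffSum τ g ·) := by
  ext x
  simp [birkhoffMax, Finset.sup'_apply]

theorem birkhoffMax_nonneg (g : α → ℝ) (N : ℕ) (x : α) : 0 ≤ birkhoffMax τ g N x :=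
  (birkhoffSum_zero τ g x).symm.le.trans
    (le_sup' (fun n => birkhoffSum τ g n x) (mem_range.2 N.succ_pos))

theorem birkhoffMax_pos_iff {g : α → ℝ} {N : ℕ} {x : α} :
    0 < birkhoffMax τ g N x ↔ ∃ n ≤ N, 0 < birkhoffSum τ g n x := by
  simp [birkhoffMax, lt_sup'_iff]

theorem birkhoffMax_le_add_birkhoffMax_apply {g : α → ℝ} {N : ℕ} {x : α}
    (h : 0 < birkhoffMax τ g N x) : birkhoffMax τ g N x ≤ g x + birkhoffMax τ g N (τ x) := by
  obtain ⟨n, hn, hmax⟩ := exists_mem_eq_sup' nonempty_range_add_one fun n => birkhoffSum τ g n x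
  rw [birkhoffMax, hmax] at h ⊢
  rcases n with _ | m
  · simp at h
  rw [birkhoffSum_succ']
  gcongr
  exact le_sup' (fun n => birkhoffSum τ g n (τ x)) (mem_range.2 (by simp at hn; omega))

noncomputable def birkhoffLimsup (τ : α → α) (g : α → ℝ) (x : α) : EReal :=
  limsup (fun n => ((birkhoffAverage ℝ τ g n x : ℝ) : EReal)) atTop

theorem birkhoffLimsup_apply (g : α → ℝ) (x : α) :
    birkhoffLimsup τ g (τ x) = birkhoffLimsup τ g x := by
  refine (EReal.limsup_eq_of_succ_mul_eq (g x) fun n => ?_).symm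
  have := natCast_mul_birkhoffAverage (τ := τ) g (n + 1) x
  push_cast at this
  rw [this, natCast_mul_birkhoffAverage, birkhoffSum_succ']

theorem birkhoffLimsup_neg (g : α → ℝ) (x : α) :
    birkhoffLimsup τ (-g) x =
      -liminf (fun n => ((birkhoffAverage ℝ τ g n x : ℝ) : EReal)) atTop := by
  rw [← EReal.limsup_neg, birkhoffLimsup]
  congr with n
  simp [birkhoffAverage_neg]

theorem exists_mul_lt_birkhoffSum_of_lt_birkhoffLimsup {g : α → ℝ} {x : α} {b : ℝ}
    (h : (b : EReal) < birkhoffLimsup τ g x) : ∃ n : ℕ, n * b < birkhoffSum τ g n x := by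
  obtain ⟨n, hbn, hn⟩ :=
    ((frequently_lt_of_lt_limsup (by isBoundedDefault) h).and_eventually
      (eventually_gt_atTop 0)).exists
  refine ⟨n, ?_⟩
  rw [← natCast_mul_birkhoffAverage]
  exact mul_lt_mul_of_pos_left (by exact_mod_cast hbn) (by exact_mod_cast hn)

variable [MeasurableSpace α]

theorem Measurable.birkhoffSum {g : α → ℝ} (hg : Measurable g) (hτ : Measurable τ) (n : ℕ) :
    Measurable (birkhoffSum τ g n) :=
  Finset.measurable_sum _ fun k _ => hg.comp (hτ.iterate k)

theorem Measurable.birkhoffAverage {g : α → ℝ} (hg : Measurable g) (hτ : Measurable τ) (n : ℕ) :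
    Measurable (birkhoffAverage ℝ τ g n) :=
  measurable_const.mul (hg.birkhoffSum hτ n)

theorem Measurable.birkhoffMax {g : α → ℝ} (hg : Measurable g) (hτ : Measurable τ) (N : ℕ) :
    Measurable (birkhoffMax τ g N) := by
  rw [birkhoffMax_eq_sup']
  exact sup'_induction (p := Measurable) _ _ (fun _ h₁ _ h₂ => h₁.max h₂)
    fun n _ => hg.birkhoffSum hτ n

theorem Measurable.birkhoffLimsup {g : α → ℝ} (hg : Measurable g) (hτ : Measurable τ) :
    Measurable (birkhoffLimsup τ g) :=
  .limsup fun n => measurable_coe_real_ereal.comp (hg.birkhoffAverage hτ n)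

variable {μ : Measure α}

theorem MeasureTheory.Integrable.birkhoffSum {g : α → ℝ} (hg : Integrable g μ)
    (hτ : MeasurePreserving τ μ μ) (n : ℕ) : Integrable (birkhoffSum τ g n) μ :=
  integrable_finsetSum _ fun k _ => (hτ.iterate k).integrable_comp_of_integrable hg

theorem MeasureTheory.Integrable.birkhoffMax {g : α → ℝ} (hg : Integrable g μ)
    (hτ : MeasurePreserving τ μ μ) (N : ℕ) : Integrable (birkhoffMax τ g N) μ := by
  rw [birkhoffMax_eq_sup']
  exact sup'_induction (p := (Integrable · μ)) _ _ (fun _ h₁ _ h₂ => h₁.sup h₂)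
    fun n _ => hg.birkhoffSum hτ n

theorem setIntegral_birkhoffMax_pos_nonneg (hτ : MeasurePreserving τ μ μ) {g : α → ℝ}
    (hgm : Measurable g) (hg : Integrable g μ) (N : ℕ) :
    0 ≤ ∫ x in {x | 0 < birkhoffMax τ g N x}, g x ∂μ := by
  set M := birkhoffMax τ g N
  have hM : Integrable M μ := hg.birkhoffMax hτ N
  have hMτ : Integrable (fun x => M (τ x)) μ := hτ.integrable_comp_of_integrable hM
  -- On `{M > 0}` the maximum is attained by a nonempty sum, which starts with `g x`;
  -- off it, `M = 0 ≤ M ∘ τ`.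
  have hle : ∀ x, M x - M (τ x) ≤ {x | 0 < M x}.indicator g x := fun x => by
    by_cases hx : 0 < M x
    · simpa [hx] using birkhoffMax_le_add_birkhoffMax_apply hx
    · simpa [hx, le_antisymm (not_lt.1 hx) (birkhoffMax_nonneg g N x)] using
        birkhoffMax_nonneg g N (τ x)
  have hcomp : ∫ x, M (τ x) ∂μ = ∫ x, M x ∂μ := by
    have hMmap : AEStronglyMeasurable M (μ.map τ) := by
      rw [hτ.map_eq]; exact hM.aestronglyMeasurable
    rw [← integral_map hτ.aemeasurable hMmap, hτ.map_eq]
  calc (0 : ℝ) = ∫ x, (M x - M (τ x)) ∂μ := by rw [integral_sub hM hMτ, hcomp, sub_self]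
    _ ≤ ∫ x, {x | 0 < M x}.indicator g x ∂μ :=
        integral_mono (hM.sub hMτ) (hg.indicator ?_) hle
    _ = ∫ x in {x | 0 < M x}, g x ∂μ := integral_indicator ?_
  all_goals exact measurableSet_lt measurable_const (hgm.birkhoffMax hτ.measurable N)

theorem setIntegral_exists_birkhoffSum_pos_nonneg (hτ : MeasurePreserving τ μ μ) {g : α → ℝ}
    (hgm : Measurable g) (hg : Integrable g μ) :
    0 ≤ ∫ x in {x | ∃ n, 0 < birkhoffSum τ g n x}, g x ∂μ := by
  have hU : {x | ∃ n, 0 < birkhoffSum τ g n x} = ⋃ N, {x | 0 < birkhoffMax τ g N x} := by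
    ext x
    simp only [Set.mem_ofPred_eq, Set.mem_iUnion, birkhoffMax_pos_iff]
    exact ⟨fun ⟨n, hn⟩ => ⟨n, n, le_rfl, hn⟩, fun ⟨_, n, _, hn⟩ => ⟨n, hn⟩⟩
  have hmono : Monotone fun N => {x | 0 < birkhoffMax τ g N x} := fun N N' hN x => by
    simp only [Set.mem_ofPred_eq, birkhoffMax_pos_iff]
    exact fun ⟨n, hn, hpos⟩ => ⟨n, hn.trans hN, hpos⟩
  rw [hU]
  exact ge_of_tendsto' (tendsto_setIntegral_of_monotone
    (fun N => measurableSet_lt measurable_const (hgm.birkhoffMax hτ.measurable N)) hmono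
    hg.integrableOn) (setIntegral_birkhoffMax_pos_nonneg hτ hgm hg)

theorem setIntegral_nonneg_of_forall_exists_birkhoffSum_pos (hτ : MeasurePreserving τ μ μ)
    {E : Set α} (hEm : MeasurableSet E) (hE : τ ⁻¹' E = E) {g : α → ℝ} (hgm : Measurable g)
    (hg : IntegrableOn g E μ) (hpos : ∀ x ∈ E, ∃ n, 0 < birkhoffSum τ g n x) :
    0 ≤ ∫ x in E, g x ∂μ := by
  have hset : {x | ∃ n, 0 < birkhoffSum τ (E.indicator g) n x} = E := by
    ext x
    by_cases hx : x ∈ E <;> simp [birkhoffSum_indicator hE, hx, hpos]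
  have := setIntegral_exists_birkhoffSum_pos_nonneg hτ (hgm.indicator hEm)
    ((integrable_indicator_iff hEm).2 hg)
  rwa [hset, setIntegral_indicator hEm, Set.inter_self] at this

theorem mul_measureReal_le_setIntegral_of_lt_birkhoffSum (hτ : MeasurePreserving τ μ μ)
    {E : Set α} (hEm : MeasurableSet E) (hE : τ ⁻¹' E = E) (hfin : μ E ≠ ∞) {g : α → ℝ}
    (hgm : Measurable g) (hg : IntegrableOn g E μ) {b : ℝ}
    (hlt : ∀ x ∈ E, ∃ n : ℕ, n * b < birkhoffSum τ g n x) :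
    b * μ.real E ≤ ∫ x in E, g x ∂μ := by
  have hpos : ∀ x ∈ E, ∃ n, 0 < birkhoffSum τ (fun y => g y - b) n x := fun x hx => by
    obtain ⟨n, hn⟩ := hlt x hx
    exact ⟨n, by simpa [birkhoffSum, Finset.sum_sub_distrib] using hn⟩
  have := setIntegral_nonneg_of_forall_exists_birkhoffSum_pos hτ hEm hE
    (hgm.sub measurable_const) (hg.sub (integrableOn_const hfin)) hpos
  rwa [integral_sub' hg (integrableOn_const hfin), setIntegral_const, smul_eq_mul, mul_comm,
    sub_nonneg] at this

theorem measure_ne_top_of_lt_birkhoffSum [SigmaFinite μ] (hτ : MeasurePreserving τ μ μ)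
    {E : Set α} (hEm : MeasurableSet E) (hE : τ ⁻¹' E = E) {g : α → ℝ} (hgm : Measurable g)
    (hg : IntegrableOn g E μ) {b : ℝ} (hb : 0 < b)
    (hlt : ∀ x ∈ E, ∃ n : ℕ, n * b < birkhoffSum τ g n x) : μ E ≠ ∞ := by
  set I := ∫ x in E, g x ∂μ
  -- `b μ C ≤ ∫_E g` for finite-measure `C ⊆ E`, and σ-finiteness provides such `C` of
  -- arbitrarily large measure.
  have hC : ∀ C ⊆ E, MeasurableSet C → μ C ≠ ∞ → b * μ.real C ≤ I := by
    intro C hCE hCm hCfin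
    have hbC : IntegrableOn (C.indicator fun _ => b) E μ :=
      ((integrable_indicator_iff hCm).2 (integrableOn_const hCfin)).integrableOn
    have hpos : ∀ x ∈ E, ∃ n, 0 < birkhoffSum τ (g - C.indicator fun _ => b) n x :=
      fun x hx => by
        obtain ⟨n, hn⟩ := hlt x hx
        have hCb := birkhoffSum_le_mul (τ := τ) (g := C.indicator fun _ => b)
          (fun y => Set.indicator_apply_le' (fun _ => le_rfl) fun _ => hb.le) n x
        exact ⟨n, by rw [birkhoffSum_sub]; linarith⟩
    have := setIntegral_nonneg_of_forall_exists_birkhoffSum_pos hτ hEm hE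
      (hgm.sub (measurable_const.indicator hCm)) (hg.sub hbC) hpos
    rw [integral_sub' hg hbC, setIntegral_indicator hCm, Set.inter_eq_right.2 hCE,
      setIntegral_const, smul_eq_mul] at this
    linarith
  have hI : 0 ≤ I := by simpa using hC ∅ (Set.empty_subset E) .empty (by simp)
  intro htop
  obtain ⟨C, hCm, hCE, hCbig, hCfin⟩ := Measure.exists_subset_measure_lt_top hEm
    (htop ▸ ENNReal.ofReal_lt_top : ENNReal.ofReal (I / b) < μ E)
  have hlt := (ENNReal.ofReal_lt_iff_lt_toReal (by positivity) hCfin.ne).1 hCbig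
  rw [div_lt_iff₀ hb, ← measureReal_def] at hlt
  linarith [hC C hCE hCm hCfin.ne]

theorem measure_birkhoffLimsup_eq_top_eq_zero [SigmaFinite μ] (hτ : MeasurePreserving τ μ μ)
    {g : α → ℝ} (hgm : Measurable g) (hg : Integrable g μ) :
    μ {x | birkhoffLimsup τ g x = ⊤} = 0 := by
  set E := {x | birkhoffLimsup τ g x = ⊤}
  have hEm : MeasurableSet E := hgm.birkhoffLimsup hτ.measurable (measurableSet_singleton ⊤)
  have hE : τ ⁻¹' E = E := by ext x; simp [E, birkhoffLimsup_apply]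
  have hlt (b : ℝ) : ∀ x ∈ E, ∃ n : ℕ, n * b < birkhoffSum τ g n x := fun x hx =>
    exists_mul_lt_birkhoffSum_of_lt_birkhoffLimsup (hx.symm ▸ EReal.coe_lt_top b)
  have hfin := measure_ne_top_of_lt_birkhoffSum hτ hEm hE hgm hg.integrableOn one_pos (hlt 1)
  have hb (b : ℝ) := mul_measureReal_le_setIntegral_of_lt_birkhoffSum hτ hEm hE hfin hgm
    hg.integrableOn (hlt b)
  refine (measureReal_eq_zero_iff hfin).1 (le_antisymm ?_ measureReal_nonneg)
  by_contra! hpos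
  have := hb ((∫ x in E, g x ∂μ + 1) / μ.real E)
  rw [div_mul_cancel₀ _ hpos.ne'] at this
  linarith

theorem measure_lt_birkhoffLimsup_and_lt_birkhoffLimsup_neg_eq_zero [SigmaFinite μ]
    (hτ : MeasurePreserving τ μ μ) {g : α → ℝ} (hgm : Measurable g) (hg : Integrable g μ)
    {a b : ℝ} (hab : a < b) :
    μ {x | (b : EReal) < birkhoffLimsup τ g x ∧ ((-a : ℝ) : EReal) < birkhoffLimsup τ (-g) x}
      = 0 := by
  wlog hb : 0 < b generalizing g a b
  -- `(-g, -b, -a)` describes the same set.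
  · simpa [and_comm] using this hgm.neg hg.neg (neg_lt_neg hab) (by linarith)
  set E := {x | (b : EReal) < birkhoffLimsup τ g x ∧
    ((-a : ℝ) : EReal) < birkhoffLimsup τ (-g) x}
  have hEm : MeasurableSet E :=
    (measurableSet_lt measurable_const (hgm.birkhoffLimsup hτ.measurable)).inter
      (measurableSet_lt measurable_const (hgm.neg.birkhoffLimsup hτ.measurable))
  have hE : τ ⁻¹' E = E := by ext x; simp [E, birkhoffLimsup_apply]
  have hltb : ∀ x ∈ E, ∃ n : ℕ, n * b < birkhoffSum τ g n x := fun x hx =>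
    exists_mul_lt_birkhoffSum_of_lt_birkhoffLimsup hx.1
  have hfin := measure_ne_top_of_lt_birkhoffSum hτ hEm hE hgm hg.integrableOn hb hltb
  have hupper := mul_measureReal_le_setIntegral_of_lt_birkhoffSum hτ hEm hE hfin hgm
    hg.integrableOn hltb
  have hlower := mul_measureReal_le_setIntegral_of_lt_birkhoffSum hτ hEm hE hfin hgm.neg
    hg.neg.integrableOn fun x hx => exists_mul_lt_birkhoffSum_of_lt_birkhoffLimsup hx.2
  rw [Pi.neg_def, integral_neg] at hlower
  refine (measureReal_eq_zero_iff hfin).1 (le_antisymm ?_ measureReal_nonneg)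
  nlinarith

theorem ae_birkhoffLimsup_le_neg_birkhoffLimsup_neg [SigmaFinite μ]
    (hτ : MeasurePreserving τ μ μ) {g : α → ℝ} (hgm : Measurable g) (hg : Integrable g μ) :
    ∀ᵐ x ∂μ, birkhoffLimsup τ g x ≤ -birkhoffLimsup τ (-g) x := by
  have hpair : ∀ᵐ x ∂μ, ∀ q r : ℚ, (q : ℝ) < r →
      ¬(((r : ℝ) : EReal) < birkhoffLimsup τ g x ∧
        ((-q : ℝ) : EReal) < birkhoffLimsup τ (-g) x) := by
    refine ae_all_iff.2 fun q => ae_all_iff.2 fun r => ?_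
    by_cases hqr : (q : ℝ) < r
    · filter_upwards [measure_eq_zero_iff_ae_notMem.1
        (measure_lt_birkhoffLimsup_and_lt_birkhoffLimsup_neg_eq_zero hτ hgm hg hqr)]
        with x hx _ using hx
    · exact .of_forall fun x h => absurd h hqr
  filter_upwards [hpair] with x hx
  by_contra! hlt
  obtain ⟨q, hq, hqr⟩ := EReal.exists_rat_btwn_of_lt hlt
  obtain ⟨r, hqr', hr⟩ := EReal.exists_rat_btwn_of_lt hqr
  refine hx q r (by exact_mod_cast hqr') ⟨hr, ?_⟩
  rw [EReal.coe_neg]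
  exact EReal.neg_lt_comm.1 hq

theorem ae_exists_tendsto_birkhoffAverage [SigmaFinite μ] (hτ : MeasurePreserving τ μ μ)
    {g : α → ℝ} (hgm : Measurable g) (hg : Integrable g μ) :
    ∀ᵐ x ∂μ, ∃ L, Tendsto (birkhoffAverage ℝ τ g · x) atTop (𝓝 L) := by
  filter_upwards [ae_birkhoffLimsup_le_neg_birkhoffLimsup_neg hτ hgm hg,
    measure_eq_zero_iff_ae_notMem.1 (measure_birkhoffLimsup_eq_top_eq_zero hτ hgm hg),
    measure_eq_zero_iff_ae_notMem.1 (measure_birkhoffLimsup_eq_top_eq_zero hτ hgm.neg hg.neg)]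
    with x hle htop hbot
  rw [birkhoffLimsup_neg, neg_neg] at hle
  rw [birkhoffLimsup_neg, EReal.neg_eq_top_iff] at hbot
  exact Real.exists_tendsto_of_limsup_le_liminf hle htop hbot

end BirkhoffSum

/-- Birkhoff individual ergodic theorem for functions in `R₀ = (L₁ + L∞)₀`:
if every truncation `f · 1_{|f| > λ}` is integrable, the Birkhoff averages
converge a.e. to a finite limit. -/
theorem birkhoff_R0_ae_tendsto {α : Type*} [MeasurableSpace α] (μ : Measure α)
    [SigmaFinite μ] (τ : α → α) (hτ : MeasurePreserving τ μ μ)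
    (f : α → ℝ) (hf : Measurable f)
    (hR0 : ∀ l : ℝ, 0 < l → Integrable ({x | l < |f x|}.indicator f) μ) :
    ∀ᵐ x ∂μ, ∃ L : ℝ,
      Tendsto (fun n : ℕ => (n : ℝ)⁻¹ * ∑ k ∈ Finset.range n, f (τ^[k] x))
        atTop (nhds L) := by
  set trunc : ℕ → α → ℝ := fun j => {x | 1 / ((j : ℝ) + 1) < |f x|}.indicator f
  have htrunc (j : ℕ) : ∀ᵐ x ∂μ, ∃ L, Tendsto (birkhoffAverage ℝ τ (trunc j) · x) atTop (𝓝 L) :=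
    ae_exists_tendsto_birkhoffAverage hτ (hf.indicator (measurableSet_lt measurable_const hf.abs))
      (hR0 _ (by positivity))
  filter_upwards [ae_all_iff.2 htrunc] with x hx
  refine cauchySeq_tendsto_of_complete (cauchySeq_of_forall_dist_le_of_cauchySeq fun ε hε => ?_)
  obtain ⟨j, hj⟩ := exists_nat_one_div_lt hε
  obtain ⟨L, hL⟩ := hx j
  refine ⟨_, hL.cauchySeq, fun n => ?_⟩
  have := abs_birkhoffAverage_le (τ := τ) (g := f - trunc j)
    (abs_sub_indicator_lt_abs_le f (by positivity)) n x
  rw [birkhoffAverage_sub, Pi.sub_apply] at this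
  exact (Real.dist_eq _ _ ▸ this).trans hj.le
end

section
/- Let (α, μ) be a σ-finite measure space and let T be a Dunford–Schwartz operator on L₁(μ): a linear map T : L₁(μ) → L₁(μ) such that 0 ≤ f implies 0 ≤ Tf, ‖Tf‖₁ ≤ ‖f‖₁ for all f ∈ L₁(μ), and ‖Tf‖_∞ ≤ ‖f‖_∞ for all f ∈ L₁(μ) ∩ L∞(μ). Then for every f ∈ L₁(μ) with f ≥ 0 and every ε > 0 there exists a measurable set E ⊆ α with μ(α \ E) ≤ ‖f‖₁ / ε such that for every n ≥ 1, Sₙ(T)f ≤ ε μ-a.e. on E, where Sₙ(T)f = (1/n)·∑_{k=0}^{n-1} T^k f. -/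
open MeasureTheory Filter Finset ENNReal

/-!
Hopf's maximal ergodic lemma: for a positive `L₁`-contraction `T` and `g ∈ L₁`, the maximum `F`
of the partial sums `∑_{k<n} T^k g`, `1 ≤ n ≤ N + 1`, satisfies `F ≤ g + T F⁺`, and integrating
over `{F > 0}`, on which `F = F⁺`, gives `∫_{F > 0} g ≥ ∫ F⁺ - ∫ T F⁺ ≥ 0`.

Let `A` be the set where `∑_{k<n} T^k f > n ε` for some `1 ≤ n ≤ N`, and apply Hopf's lemma to
`g = f - ε 1_A`. Since `T` contracts `L∞`, `∑_{k<n} T^k 1_A ≤ n`, so `A ⊆ {F > 0}` and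
`0 ≤ ∫_{F > 0} g ≤ ‖f‖₁ - ε μ(A)`. The set `E` is the complement of the increasing union of
these `A` over `N`.
-/

section ErgodicSum

variable {R M : Type*} [Semiring R] [AddCommMonoid M] [Module R M]

def ergodicSum (T : M →ₗ[R] M) (n : ℕ) : M →ₗ[R] M := ∑ k ∈ range n, T ^ k

lemma ergodicSum_apply (T : M →ₗ[R] M) (n : ℕ) (f : M) :
    ergodicSum T n f = ∑ k ∈ range n, (T ^ k) f :=
  LinearMap.sum_apply ..

@[simp]
lemma ergodicSum_zero (T : M →ₗ[R] M) : ergodicSum T 0 = 0 := sum_range_zero _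

lemma ergodicSum_succ_apply (T : M →ₗ[R] M) (n : ℕ) (f : M) :
    ergodicSum T (n + 1) f = f + T (ergodicSum T n f) := by
  simp only [ergodicSum_apply, sum_range_succ', pow_succ', Module.End.mul_apply, map_sum,
    pow_zero, Module.End.one_apply, add_comm]

end ErgodicSum

section Hopf

variable {R M : Type*} [Semiring R] [AddCommMonoid M] [SemilatticeSup M] [Module R M]

/-- `max_{1 ≤ n ≤ N + 1} ∑_{k<n} T^k g`, indexed so that the maximum is over a nonempty set. -/
def maxErgodicSum (T : M →ₗ[R] M) (N : ℕ) (g : M) : M :=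
  (range (N + 1)).sup' nonempty_range_add_one fun i => ergodicSum T (i + 1) g

lemma ergodicSum_le_maxErgodicSum (T : M →ₗ[R] M) (g : M) {n N : ℕ} (hn : 1 ≤ n)
    (hnN : n ≤ N + 1) : ergodicSum T n g ≤ maxErgodicSum T N g := by
  obtain ⟨i, rfl⟩ := Nat.exists_eq_add_of_le' hn
  exact le_sup' (fun i => ergodicSum T (i + 1) g) (mem_range.2 (by omega))

lemma ergodicSum_le_maxErgodicSum_sup_zero (T : M →ₗ[R] M) (g : M) {n N : ℕ}
    (hnN : n ≤ N + 1) : ergodicSum T n g ≤ maxErgodicSum T N g ⊔ 0 := by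
  rcases Nat.eq_zero_or_pos n with rfl | hn
  · simp
  · exact (ergodicSum_le_maxErgodicSum T g hn hnN).trans le_sup_left

lemma maxErgodicSum_le_add_map_sup_zero [IsOrderedAddMonoid M] {T : M →ₗ[R] M}
    (hT : Monotone T) (N : ℕ) (g : M) :
    maxErgodicSum T N g ≤ g + T (maxErgodicSum T N g ⊔ 0) := by
  refine sup'_le _ _ fun i hi => ?_
  rw [ergodicSum_succ_apply]
  exact add_le_add_right (hT (ergodicSum_le_maxErgodicSum_sup_zero T g
    (mem_range.1 hi).le)) g

end Hopf

section Measure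

variable {α : Type*} [MeasurableSpace α] {μ : Measure α}

lemma setIntegral_pos_nonneg_of_le_add {F g v : α → ℝ} (hFm : Measurable F)
    (hF : Integrable F μ) (hg : Integrable g μ) (hv : Integrable v μ) (hv0 : 0 ≤ᵐ[μ] v)
    (hle : F ≤ᵐ[μ] g + v) (hvF : ∫ x, v x ∂μ ≤ ∫ x, max (F x) 0 ∂μ) :
    0 ≤ ∫ x in {x | 0 < F x}, g x ∂μ := by
  set E := {x | 0 < F x}
  have hE : MeasurableSet E := measurableSet_lt measurable_const hFm
  have hF_pos : ∫ x, max (F x) 0 ∂μ = ∫ x in E, F x ∂μ := by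
    rw [← integral_indicator hE]
    congr 1 with x
    by_cases hx : 0 < F x
    · simp [E, Set.indicator_of_mem (show x ∈ E from hx), hx.le]
    · simp [E, not_lt.1 hx]
  have hF_le : ∫ x in E, F x ∂μ ≤ ∫ x in E, g x ∂μ + ∫ x in E, v x ∂μ := by
    rw [← integral_add hg.restrict hv.restrict]
    exact integral_mono_ae hF.restrict (hg.restrict.add hv.restrict) (ae_restrict_of_ae hle)
  have hv_le : ∫ x in E, v x ∂μ ≤ ∫ x, v x ∂μ := setIntegral_le_integral hv hv0
  linarith

lemma integral_coeFn_le_norm (f : Lp ℝ 1 μ) : ∫ x, f x ∂μ ≤ ‖f‖ := by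
  rw [L1.norm_eq_integral_norm]
  exact (Real.le_norm_self _).trans (norm_integral_le_integral_norm _)

lemma norm_sup_zero_eq_integral (f : Lp ℝ 1 μ) : ‖f ⊔ 0‖ = ∫ x, max (f x) 0 ∂μ := by
  rw [L1.norm_eq_integral_norm]
  refine integral_congr_ae ?_
  filter_upwards [Lp.coeFn_sup f 0, Lp.coeFn_zero ℝ 1 μ] with x hsup hzero
  rw [hsup, Pi.sup_apply, hzero, Pi.zero_apply, Real.norm_of_nonneg (le_max_right _ _)]

/-- **Hopf's maximal ergodic lemma.** -/
theorem setIntegral_maxErgodicSum_pos_nonneg (T : Lp ℝ 1 μ →ₗ[ℝ] Lp ℝ 1 μ)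
    (hpos : ∀ f, 0 ≤ f → 0 ≤ T f) (hL1 : ∀ f, ‖T f‖ ≤ ‖f‖) (N : ℕ) (g : Lp ℝ 1 μ) :
    0 ≤ ∫ x in {x | 0 < maxErgodicSum T N g x}, g x ∂μ := by
  set F := maxErgodicSum T N g
  have hle : F ≤ g + T (F ⊔ 0) :=
    maxErgodicSum_le_add_map_sup_zero (OrderHomClass.mono (PositiveLinearMap.mk₀ T hpos)) N g
  refine setIntegral_pos_nonneg_of_le_add (Lp.stronglyMeasurable F).measurable
    (L1.integrable_coeFn F) (L1.integrable_coeFn g) (L1.integrable_coeFn (T (F ⊔ 0)))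
    ((Lp.coeFn_nonneg _).2 (hpos _ le_sup_right)) ?_ ?_
  · filter_upwards [(Lp.coeFn_le _ _).2 hle, Lp.coeFn_add g (T (F ⊔ 0))] with x hx hadd
    rwa [hadd] at hx
  · calc ∫ x, T (F ⊔ 0) x ∂μ ≤ ‖T (F ⊔ 0)‖ := integral_coeFn_le_norm _
      _ ≤ ‖F ⊔ 0‖ := hL1 _
      _ = ∫ x, max (F x) 0 ∂μ := norm_sup_zero_eq_integral F

lemma ae_le_one_of_eLpNorm_top_le_one {u : α → ℝ} (hu : eLpNorm u ⊤ μ ≤ 1) :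
    ∀ᵐ x ∂μ, u x ≤ 1 := by
  rw [eLpNorm_exponent_top] at hu
  filter_upwards [enorm_ae_le_eLpNormEssSup u μ] with x hx
  have : ‖u x‖ ≤ 1 := by
    have := hx.trans hu
    rwa [← ofReal_norm, ENNReal.ofReal_le_one] at this
  exact (le_abs_self _).trans this

lemma eLpNorm_top_pow_apply_le {p : ℝ≥0∞} {T : Lp ℝ p μ →ₗ[ℝ] Lp ℝ p μ}
    (hLinf : ∀ f : Lp ℝ p μ, MemLp f ⊤ μ → eLpNorm (T f) ⊤ μ ≤ eLpNorm f ⊤ μ)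
    {u : Lp ℝ p μ} (hu : MemLp u ⊤ μ) (k : ℕ) : eLpNorm ((T ^ k) u) ⊤ μ ≤ eLpNorm u ⊤ μ := by
  induction k with
  | zero => simp
  | succ k ih =>
    rw [pow_succ', Module.End.mul_apply]
    exact (hLinf _ ⟨Lp.aestronglyMeasurable _, ih.trans_lt hu.eLpNorm_lt_top⟩).trans ih

lemma ae_ergodicSum_le {p : ℝ≥0∞} {T : Lp ℝ p μ →ₗ[ℝ] Lp ℝ p μ}
    (hLinf : ∀ f : Lp ℝ p μ, MemLp f ⊤ μ → eLpNorm (T f) ⊤ μ ≤ eLpNorm f ⊤ μ)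
    {u : Lp ℝ p μ} (hu : eLpNorm u ⊤ μ ≤ 1) (n : ℕ) :
    ∀ᵐ x ∂μ, ergodicSum T n u x ≤ n := by
  have hmem : MemLp u ⊤ μ := ⟨Lp.aestronglyMeasurable u, hu.trans_lt one_lt_top⟩
  have hiter : ∀ᵐ x ∂μ, ∀ k, (T ^ k) u x ≤ 1 := ae_all_iff.2 fun k =>
    ae_le_one_of_eLpNorm_top_le_one ((eLpNorm_top_pow_apply_le hLinf hmem k).trans hu)
  filter_upwards [hiter, Lp.coeFn_fun_finsetSum (range n) fun k => (T ^ k) u] with x hx hsum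
  rw [ergodicSum_apply, hsum]
  simpa using sum_le_sum fun k (_ : k ∈ range n) => hx k

def exceedSet (T : Lp ℝ 1 μ →ₗ[ℝ] Lp ℝ 1 μ) (f : Lp ℝ 1 μ) (ε : ℝ) (N : ℕ) : Set α :=
  ⋃ n ∈ Icc 1 N, {x | n * ε < ergodicSum T n f x}

section exceedSet

variable (T : Lp ℝ 1 μ →ₗ[ℝ] Lp ℝ 1 μ) (f : Lp ℝ 1 μ) {ε : ℝ}

lemma measurableSet_exceedSet (N : ℕ) : MeasurableSet (exceedSet T f ε N) :=
  Finset.measurableSet_biUnion _ fun _ _ =>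
    measurableSet_lt measurable_const (Lp.stronglyMeasurable _).measurable

lemma measure_exceedSet_lt_top (hε : 0 < ε) (N : ℕ) : μ (exceedSet T f ε N) < ∞ :=
  measure_biUnion_lt_top (Icc 1 N).finite_toSet fun _ hn =>
    (L1.integrable_coeFn _).measure_gt_lt_top
      (mul_pos (Nat.cast_pos.2 (mem_Icc.1 hn).1) hε)

lemma exceedSet_mono : Monotone (exceedSet T f ε) := fun _ _ hNN' =>
  Set.biUnion_subset_biUnion_left fun _ hn => by
    simp only [coe_Icc, Set.mem_Icc] at hn ⊢
    omega

variable {T}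

lemma exceedSet_ae_subset_maxErgodicSum_pos
    (hLinf : ∀ f : Lp ℝ 1 μ, MemLp f ⊤ μ → eLpNorm (T f) ⊤ μ ≤ eLpNorm f ⊤ μ)
    (hε : 0 ≤ ε) {u : Lp ℝ 1 μ} (hu : eLpNorm u ⊤ μ ≤ 1) (N : ℕ) :
    ∀ᵐ x ∂μ, x ∈ exceedSet T f ε N → 0 < maxErgodicSum T N (f - ε • u) x := by
  have hbound : ∀ n ∈ Icc 1 N, ∀ᵐ x ∂μ,
      n * ε < ergodicSum T n f x → 0 < maxErgodicSum T N (f - ε • u) x := by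
    intro n hn
    have hle := (Lp.coeFn_le _ _).2 (ergodicSum_le_maxErgodicSum T (f - ε • u) (mem_Icc.1 hn).1
      ((mem_Icc.1 hn).2.trans N.le_succ))
    rw [map_sub, map_smul] at hle
    filter_upwards [hle, Lp.coeFn_sub (ergodicSum T n f) (ε • ergodicSum T n u),
      Lp.coeFn_smul ε (ergodicSum T n u), ae_ergodicSum_le hLinf hu n] with x hle hsub hsmul hun hx
    rw [hsub, Pi.sub_apply, hsmul, Pi.smul_apply, smul_eq_mul] at hle
    have := mul_le_mul_of_nonneg_left hun hε
    linarith
  filter_upwards [eventually_all_finset _ |>.2 hbound] with x hx hxA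
  simp only [exceedSet, Set.mem_iUnion] at hxA
  obtain ⟨n, hn, hxn⟩ := hxA
  exact hx n hn hxn

end exceedSet

theorem measure_exceedSet_le {T : Lp ℝ 1 μ →ₗ[ℝ] Lp ℝ 1 μ}
    (hpos : ∀ f, 0 ≤ f → 0 ≤ T f) (hL1 : ∀ f, ‖T f‖ ≤ ‖f‖)
    (hLinf : ∀ f : Lp ℝ 1 μ, MemLp f ⊤ μ → eLpNorm (T f) ⊤ μ ≤ eLpNorm f ⊤ μ)
    {f : Lp ℝ 1 μ} (hf : 0 ≤ f) {ε : ℝ} (hε : 0 < ε) (N : ℕ) :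
    μ (exceedSet T f ε N) ≤ ENNReal.ofReal (‖f‖ / ε) := by
  set A := exceedSet T f ε N
  have hA := measurableSet_exceedSet T f (ε := ε) N
  have hAfin := (measure_exceedSet_lt_top T f hε N).ne
  set u : Lp ℝ 1 μ := indicatorConstLp 1 hA hAfin 1
  have hu : eLpNorm u ⊤ μ ≤ 1 := by
    rw [eLpNorm_congr_ae indicatorConstLp_coeFn, eLpNorm_exponent_top]
    exact (eLpNormEssSup_indicator_const_le _ _).trans (by simp)
  set E := {x | 0 < maxErgodicSum T N (f - ε • u) x}
  have hE : MeasurableSet E :=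
    measurableSet_lt measurable_const (Lp.stronglyMeasurable _).measurable
  have hAE : μ A ≤ μ (A ∩ E) := by
    refine EventuallyLE.measure_le ?_
    filter_upwards [exceedSet_ae_subset_maxErgodicSum_pos f hLinf hε.le hu N] with x hx hxA
    exact ⟨hxA, hx hxA⟩
  have hintegral : ∫ x in E, (f - ε • u) x ∂μ = ∫ x in E, f x ∂μ - ε * μ.real (A ∩ E) := by
    have hsmul : ∫ x in E, (ε • u) x ∂μ = ε * μ.real (A ∩ E) := by
      rw [integral_congr_ae (ae_restrict_of_ae (Lp.coeFn_smul ε u)), Pi.smul_def,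
        integral_smul, setIntegral_indicatorConstLp hE, smul_eq_mul, smul_eq_mul, mul_one]
    rw [integral_congr_ae (ae_restrict_of_ae (Lp.coeFn_sub f (ε • u))), Pi.sub_def,
      integral_sub (L1.integrable_coeFn f).restrict (L1.integrable_coeFn _).restrict, hsmul]
  have hfE : ∫ x in E, f x ∂μ ≤ ‖f‖ :=
    (setIntegral_le_integral (L1.integrable_coeFn f) ((Lp.coeFn_nonneg f).2 hf)).trans
      (integral_coeFn_le_norm f)
  have hhopf := setIntegral_maxErgodicSum_pos_nonneg T hpos hL1 N (f - ε • u)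
  rw [ENNReal.le_ofReal_iff_toReal_le hAfin (div_nonneg (norm_nonneg f) hε.le), le_div_iff₀ hε]
  have hAE_real : μ.real A ≤ μ.real (A ∩ E) :=
    ENNReal.toReal_mono (measure_ne_top_of_subset Set.inter_subset_left hAfin) hAE
  calc μ.real A * ε ≤ μ.real (A ∩ E) * ε := mul_le_mul_of_nonneg_right hAE_real hε.le
    _ ≤ ‖f‖ := by linarith

end Measure

theorem dunfordSchwartz_maximal_inequality_general {α : Type*} [MeasurableSpace α] (μ : Measure α)
    (T : Lp ℝ 1 μ →ₗ[ℝ] Lp ℝ 1 μ)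
    (hpos : ∀ f : Lp ℝ 1 μ, 0 ≤ f → 0 ≤ T f)
    (hL1 : ∀ f : Lp ℝ 1 μ, ‖T f‖ ≤ ‖f‖)
    (hLinf : ∀ f : Lp ℝ 1 μ, MemLp (f : α → ℝ) ⊤ μ →
      eLpNorm (T f : α → ℝ) ⊤ μ ≤ eLpNorm (f : α → ℝ) ⊤ μ)
    (f : Lp ℝ 1 μ) (hf : 0 ≤ f) (ε : ℝ) (hε : 0 < ε) :
    ∃ E : Set α, MeasurableSet E ∧ μ Eᶜ ≤ ENNReal.ofReal (‖f‖ / ε) ∧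
      ∀ n : ℕ, 1 ≤ n →
        ∀ᵐ x ∂μ, x ∈ E →
          (((n : ℝ)⁻¹ • ∑ k ∈ Finset.range n, (T ^ k) f : Lp ℝ 1 μ) : α → ℝ) x ≤ ε := by
  refine ⟨(⋃ N, exceedSet T f ε N)ᶜ,
    (MeasurableSet.iUnion (measurableSet_exceedSet T f)).compl, ?_, fun n hn => ?_⟩
  · rw [compl_compl, (exceedSet_mono T f).measure_iUnion]
    exact iSup_le (measure_exceedSet_le hpos hL1 hLinf hf hε)
  · filter_upwards [Lp.coeFn_smul (n : ℝ)⁻¹ (ergodicSum T n f)] with x hx hxE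
    have hxn : ¬ n * ε < ergodicSum T n f x := fun hlt =>
      hxE (Set.mem_iUnion.2 ⟨n, Set.mem_biUnion (mem_Icc.2 ⟨hn, le_rfl⟩) hlt⟩)
    rw [← ergodicSum_apply, hx, Pi.smul_apply, smul_eq_mul,
      inv_mul_le_iff₀ (Nat.cast_pos.2 hn)]
    exact not_lt.1 hxn

/-- Commutative form of Yeadon's maximal ergodic inequality: for a Dunford–Schwartz
operator `T` and `0 ≤ f ∈ L₁`, for every `ε > 0` there is a set `E` with
`μ(Eᶜ) ≤ ‖f‖₁ / ε` on which all the Cesàro averages `Sₙ(T)f` are `≤ ε` a.e. -/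
theorem dunfordSchwartz_maximal_inequality {α : Type*} [MeasurableSpace α] (μ : Measure α)
    [SigmaFinite μ] (T : Lp ℝ 1 μ →ₗ[ℝ] Lp ℝ 1 μ)
    (hpos : ∀ f : Lp ℝ 1 μ, 0 ≤ f → 0 ≤ T f)
    (hL1 : ∀ f : Lp ℝ 1 μ, ‖T f‖ ≤ ‖f‖)
    (hLinf : ∀ f : Lp ℝ 1 μ, MemLp (f : α → ℝ) ⊤ μ →
      eLpNorm (T f : α → ℝ) ⊤ μ ≤ eLpNorm (f : α → ℝ) ⊤ μ)
    (f : Lp ℝ 1 μ) (hf : 0 ≤ f) (ε : ℝ) (hε : 0 < ε) :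
    ∃ E : Set α, MeasurableSet E ∧ μ Eᶜ ≤ ENNReal.ofReal (‖f‖ / ε) ∧
      ∀ n : ℕ, 1 ≤ n →
        ∀ᵐ x ∂μ, x ∈ E →
          (((n : ℝ)⁻¹ • ∑ k ∈ Finset.range n, (T ^ k) f : Lp ℝ 1 μ) : α → ℝ) x ≤ ε :=
  dunfordSchwartz_maximal_inequality_general μ T hpos hL1 hLinf f hf ε hε
end

section
/- There exist a σ-finite measure space (α, μ) with μ(α) = ∞, an invertible measure-preserving transformation τ : α → α that is ergodic with respect to μ, and a bounded measurable function f : α → ℝ such that the set of points x ∈ α at which the Birkhoff averages (1/n)·∑_{k=0}^{n-1} f(τ^k x) fail to converge has positive μ-measure. -/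
open MeasureTheory Filter Finset ENNReal

/-!
Take the shift `z ↦ z + 1` on `ℤ` with counting measure; it is measure preserving, and ergodic
because a shift-invariant subset of `ℤ` is empty or everything. Along the orbit of `0` the Birkhoff
averages of `f z = g z.toNat` are the Cesàro averages of a `0/1` sequence `g` that equals `1` on the
dyadic blocks `[2^j, 2^(j+1))` with `j` even and `0` on the others. If the Cesàro averages `A_n`
of `g` converged to `L`, so would the averages over `[n, 2n)`, since those are `2 A_{2n} - A_n`;
but these are `1` for `n = 2^j` with `j` even and `0` for `j` odd.
-/

section Cesaro

variable {E : Type*} [AddCommGroup E] [Module ℝ E] [TopologicalSpace E]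
  [IsTopologicalAddGroup E] [ContinuousSMul ℝ E]

theorem tendsto_smul_sum_Ico_two_mul_of_tendsto_smul_sum_range {u : ℕ → E} {L : E}
    (hL : Tendsto (fun n : ℕ => (n : ℝ)⁻¹ • ∑ k ∈ range n, u k) atTop (nhds L)) :
    Tendsto (fun n : ℕ => (n : ℝ)⁻¹ • ∑ k ∈ Ico n (2 * n), u k) atTop (nhds L) := by
  have h_two_mul : Tendsto (fun n : ℕ => ((2 * n : ℕ) : ℝ)⁻¹ • ∑ k ∈ range (2 * n), u k)
      atTop (nhds L) :=
    hL.comp (tendsto_id.const_mul_atTop' two_pos)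
  have h_eq : ∀ n : ℕ, (n : ℝ)⁻¹ • ∑ k ∈ Ico n (2 * n), u k =
      (2 : ℝ) • (((2 * n : ℕ) : ℝ)⁻¹ • ∑ k ∈ range (2 * n), u k)
        - (n : ℝ)⁻¹ • ∑ k ∈ range n, u k := by
    intro n
    rw [sum_Ico_eq_sub _ (by omega), smul_sub, smul_smul]
    congr 2
    push_cast
    rcases eq_or_ne (n : ℝ) 0 with hn | hn
    · simp [hn]
    · field_simp
  simpa [h_eq, two_smul] using (h_two_mul.const_smul (2 : ℝ)).sub hL

theorem eq_of_tendsto_smul_sum_range_of_frequently_const_on_Ico [T1Space E] {u : ℕ → E}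
    {L c : E} (hL : Tendsto (fun n : ℕ => (n : ℝ)⁻¹ • ∑ k ∈ range n, u k) atTop (nhds L))
    (hc : ∃ᶠ n in atTop, ∀ k ∈ Ico n (2 * n), u k = c) : L = c := by
  refine isClosed_singleton.mem_of_frequently_of_tendsto ?_
    (tendsto_smul_sum_Ico_two_mul_of_tendsto_smul_sum_range hL)
  refine (hc.and_eventually (eventually_ne_atTop 0)).mono fun n ⟨hconst, hn⟩ => ?_
  rw [Set.mem_singleton_iff, sum_congr rfl hconst, sum_const, Nat.card_Ico,
    show 2 * n - n = n by omega, ← Nat.cast_smul_eq_nsmul ℝ, smul_smul,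
    inv_mul_cancel₀ (Nat.cast_ne_zero.mpr hn), one_smul]

end Cesaro

noncomputable def evenDyadicBlocks (n : ℕ) : ℝ := if Even (Nat.log 2 n) then 1 else 0

theorem evenDyadicBlocks_of_mem_Ico {j k : ℕ} (hk : k ∈ Ico (2 ^ j) (2 * 2 ^ j)) :
    evenDyadicBlocks k = if Even j then 1 else 0 := by
  rw [mem_Ico, ← pow_succ'] at hk
  rw [evenDyadicBlocks, Nat.log_eq_of_pow_le_of_lt_pow hk.1 hk.2]

theorem abs_evenDyadicBlocks_le_one (n : ℕ) : |evenDyadicBlocks n| ≤ 1 := by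
  unfold evenDyadicBlocks
  split_ifs <;> norm_num

theorem not_exists_tendsto_cesaro_evenDyadicBlocks :
    ¬ ∃ L : ℝ, Tendsto (fun n : ℕ => (n : ℝ)⁻¹ • ∑ k ∈ range n, evenDyadicBlocks k)
      atTop (nhds L) := by
  rintro ⟨L, hL⟩
  have hpow : Tendsto (fun j : ℕ => 2 ^ j) atTop atTop :=
    tendsto_pow_atTop_atTop_of_one_lt one_lt_two
  have h_one : L = 1 := eq_of_tendsto_smul_sum_range_of_frequently_const_on_Ico hL <|
    hpow.frequently_map _ (fun j hj k hk => by simp [evenDyadicBlocks_of_mem_Ico hk, hj])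
      Nat.frequently_even
  have h_zero : L = 0 := eq_of_tendsto_smul_sum_range_of_frequently_const_on_Ico hL <|
    hpow.frequently_map _ (fun j hj k hk => by
      simp [evenDyadicBlocks_of_mem_Ico hk, Nat.not_even_iff_odd.mpr hj]) Nat.frequently_odd
  exact one_ne_zero (h_one.symm.trans h_zero)

namespace Int

theorem eq_empty_or_univ_of_preimage_add_one_eq {s : Set ℤ} (hs : (· + 1) ⁻¹' s = s) :
    s = ∅ ∨ s = Set.univ := by
  have hper : Function.Periodic (· ∈ s) (1 : ℤ) := fun x => propext (Set.ext_iff.mp hs x)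
  have hmem : ∀ n : ℤ, n ∈ s ↔ (0 : ℤ) ∈ s := fun n => by
    simpa using (hper.int_mul n 0).to_iff
  by_cases h0 : (0 : ℤ) ∈ s
  · exact Or.inr (Set.eq_univ_of_forall fun n => (hmem n).mpr h0)
  · exact Or.inl (Set.eq_empty_of_forall_notMem fun n hn => h0 ((hmem n).mp hn))

theorem ergodic_add_one (μ : Measure ℤ) [μ.IsAddRightInvariant] : Ergodic (· + 1) μ where
  toMeasurePreserving := measurePreserving_add_right μ 1
  aeconst_set _ _ hs := by
    rcases eq_empty_or_univ_of_preimage_add_one_eq hs with rfl | rfl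
    exacts [eventuallyConst_set'.mpr (Or.inl .rfl), eventuallyConst_set'.mpr (Or.inr .rfl)]

end Int

/-- On some infinite σ-finite measure space there is an invertible ergodic
measure-preserving transformation and a bounded measurable function whose Birkhoff
averages fail to converge on a set of positive measure. -/
theorem exists_ergodic_bounded_birkhoff_diverges :
    ∃ (α : Type) (m : MeasurableSpace α) (μ : Measure α),
      SigmaFinite μ ∧ μ Set.univ = ⊤ ∧
      ∃ e : α ≃ α, MeasurePreserving e μ μ ∧ MeasurePreserving e.symm μ μ ∧
        Ergodic e μ ∧
        ∃ f : α → ℝ, Measurable f ∧ (∃ C : ℝ, ∀ x, |f x| ≤ C) ∧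
          0 < μ {x | ¬ ∃ L : ℝ,
            Tendsto (fun n : ℕ => (n : ℝ)⁻¹ * ∑ k ∈ Finset.range n, f ((⇑e)^[k] x))
              atTop (nhds L)} := by
  refine ⟨ℤ, inferInstance, Measure.count, inferInstance,
    Measure.count_apply_infinite Set.infinite_univ, Equiv.addRight 1,
    measurePreserving_add_right _ 1, ?_, Int.ergodic_add_one _,
    fun z => evenDyadicBlocks z.toNat, .of_discrete,
    ⟨1, fun z => abs_evenDyadicBlocks_le_one _⟩, ?_⟩
  · rw [Equiv.addRight_symm]
    exact measurePreserving_add_right _ (-1)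
  · refine pos_iff_ne_zero.mpr <| Measure.count_ne_zero
      ⟨0, fun h => not_exists_tendsto_cesaro_evenDyadicBlocks ?_⟩
    have h_orbit (k : ℕ) : (⇑(Equiv.addRight (1 : ℤ)))^[k] 0 = k := by simp
    simpa [h_orbit] using h
end

section
/- Let (α, μ) be a σ-finite measure space and let f : α → ℝ be measurable with f·1_{{|f|>λ}} integrable for every λ > 0 (i.e. f ∈ R₀). Then for every ε > 0 there exists a simple function g : α → ℝ whose support has finite μ-measure such that ‖f − g‖_{L₁+L∞} < ε. -/
open MeasureTheory Filter Finset ENNReal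

/-- The `L₁ + L∞` norm of a measurable function: the infimum of
`‖h₁‖₁ + ‖h₂‖∞` over all a.e. decompositions `h = h₁ + h₂`. -/
noncomputable def l1PlusLinftyNorm {α : Type*} [MeasurableSpace α]
    (μ : Measure α) (h : α → ℝ) : ℝ≥0∞ :=
  ⨅ (p : (α → ℝ) × (α → ℝ)) (_ : h =ᵐ[μ] p.1 + p.2),
    eLpNorm p.1 1 μ + eLpNorm p.2 ⊤ μ

/- Split `f` at height `λ = ε / 2`: the part `f · 1_{|f| > λ}` is integrable, hence
`ε / 2`-close in `L₁` to a simple function `g`, while the remainder is bounded by `λ`.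
The decomposition `f - g = (f · 1_{|f| > λ} - g) + f · 1_{|f| ≤ λ}` then shows
`‖f - g‖_{L₁+L∞} < ε`. -/

theorem l1PlusLinftyNorm_le_of_ae_eq_add {α : Type*} [MeasurableSpace α] {μ : Measure α}
    {h h₁ h₂ : α → ℝ} (hdecomp : h =ᵐ[μ] h₁ + h₂) :
    l1PlusLinftyNorm μ h ≤ eLpNorm h₁ 1 μ + eLpNorm h₂ ⊤ μ :=
  iInf₂_le (h₁, h₂) hdecomp

theorem eLpNorm_top_sub_indicator_abs_gt_le {α : Type*} [MeasurableSpace α] (μ : Measure α)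
    (f : α → ℝ) {l : ℝ} (hl : 0 ≤ l) :
    eLpNorm (f - {x | l < |f x|}.indicator f) ⊤ μ ≤ ENNReal.ofReal l := by
  refine eLpNormEssSup_le_of_ae_bound (Eventually.of_forall fun x => ?_)
  by_cases hx : l < |f x|
  · simpa [Set.indicator_of_mem, hx] using hl
  · simpa [Set.indicator_of_notMem, hx] using le_of_not_gt hx

theorem R0_approx_by_simpleFunc_general {α : Type*} [MeasurableSpace α] (μ : Measure α)
    (f : α → ℝ)
    (hR0 : ∀ l : ℝ, 0 < l → Integrable ({x | l < |f x|}.indicator f) μ) :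
    ∀ ε : ℝ, 0 < ε → ∃ g : SimpleFunc α ℝ, μ (Function.support g) < ⊤ ∧
      l1PlusLinftyNorm μ (fun x => f x - g x) < ENNReal.ofReal ε := by
  intro ε hε
  set f₁ := {x | ε / 2 < |f x|}.indicator f
  obtain ⟨g, hg_close, hg_memLp⟩ :=
    (memLp_one_iff_integrable.mpr (hR0 (ε / 2) (by positivity))).exists_simpleFunc_eLpNorm_sub_lt
      one_ne_top (ε := ENNReal.ofReal (ε / 2)) (by simpa using hε)
  refine ⟨g, g.measure_support_lt_top_of_integrable (memLp_one_iff_integrable.mp hg_memLp), ?_⟩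
  have hdecomp : (fun x => f x - g x) =ᵐ[μ] (f₁ - ⇑g) + (f - f₁) :=
    EventuallyEq.of_eq (funext fun x => by simp)
  have hrest := eLpNorm_top_sub_indicator_abs_gt_le μ f (l := ε / 2) (by positivity)
  calc l1PlusLinftyNorm μ (fun x => f x - g x)
      ≤ eLpNorm (f₁ - ⇑g) 1 μ + eLpNorm (f - f₁) ⊤ μ :=
        l1PlusLinftyNorm_le_of_ae_eq_add hdecomp
    _ < ENNReal.ofReal (ε / 2) + ENNReal.ofReal (ε / 2) :=
        ENNReal.add_lt_add_of_lt_of_le (hrest.trans_lt ofReal_lt_top).ne hg_close hrest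
    _ = ENNReal.ofReal ε := by
        rw [← ENNReal.ofReal_add (by positivity) (by positivity), add_halves]

/-- `R₀` is the closure of simple functions with finite-measure support in the
`L₁ + L∞` norm: every `f ∈ R₀` is approximated by such simple functions. -/
theorem R0_approx_by_simpleFunc {α : Type*} [MeasurableSpace α] (μ : Measure α)
    [SigmaFinite μ] (f : α → ℝ) (hf : Measurable f)
    (hR0 : ∀ l : ℝ, 0 < l → Integrable ({x | l < |f x|}.indicator f) μ) :
    ∀ ε : ℝ, 0 < ε → ∃ g : SimpleFunc α ℝ, μ (Function.support g) < ⊤ ∧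
      l1PlusLinftyNorm μ (fun x => f x - g x) < ENNReal.ofReal ε :=
  R0_approx_by_simpleFunc_general μ f hR0
end
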